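/- Let M² > 0, μ² > 0 be real numbers, θ ∈ (−π, π], and let k ≥ 0 be an integer. Define f : (0,∞) → ℂ by f(X) = (−X e^{iθ})^k · (log(X/μ²) + iθ), where log denotes the real logarithm, i.e. f(X) = z^k ln(−z/μ²) for z = −X e^{iθ} with the principal branch of the logarithm. Then the Borel transform of f at Borel mass M² exists and equals lim_{n→∞} [(n M²)^n/(n−1)!] · (−1)^n · f^{(n)}(n M²) = −k! · (M² e^{iθ})^k. -/

import Mathlib

/-!
Writing `z = -X e^{iθ}`, the principal logarithm gives `f(X) = A X^k (log X + c)` with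
`A = (-e^{iθ})^k` and `c = iθ - log μ²`. Since `(X^{k+1} log X)' = (k+1) X^k log X + X^k` and
the polynomial part is killed by `k + 1` derivatives, `(X^k log X)^{(k+1)} = k!/X`; all further
derivatives are those of `1/X`. For `n = m + k + 1` the Borel sequence at `X = n M²` is therefore
`(-1)^{k+1} k! A (M²)^k · n^k / (n-1)(n-2)⋯(n-k)`, and the last factor tends to `1`.
-/

open Filter Complex Real
open scoped Nat Topology

theorem deriv_ofReal_comp (g : ℝ → ℝ) (x : ℝ) :
    deriv (fun y => (g y : ℂ)) x = deriv g x := by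
  by_cases hg : DifferentiableAt ℝ g x
  · exact hg.hasDerivAt.ofReal_comp.deriv
  · have hc : ¬ DifferentiableAt ℝ (fun y => (g y : ℂ)) x := fun h =>
      hg (reCLM.differentiableAt.comp x h)
    rw [deriv_zero_of_not_differentiableAt hg, deriv_zero_of_not_differentiableAt hc, ofReal_zero]

theorem iteratedDeriv_ofReal_comp (g : ℝ → ℝ) (n : ℕ) :
    iteratedDeriv n (fun y => (g y : ℂ)) = fun x => ((iteratedDeriv n g x : ℝ) : ℂ) := by
  induction n with
  | zero => simp
  | succ n ih => ext x; rw [iteratedDeriv_succ, iteratedDeriv_succ, ih, deriv_ofReal_comp]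

theorem iteratedDeriv_pow_eq_zero {𝕜 : Type*} [NontriviallyNormedField 𝕜] {k n : ℕ} (h : k < n)
    (x : 𝕜) : iteratedDeriv n (fun y => y ^ k) x = 0 := by
  simp [Nat.descFactorial_eq_zero_iff_lt.2 h]

theorem contDiffAt_pow_mul_log (k : ℕ) {x : ℝ} (hx : x ≠ 0) (n : WithTop ℕ∞) :
    ContDiffAt ℝ n (fun y => y ^ k * Real.log y) x :=
  (contDiffAt_id.pow k).mul (Real.contDiffAt_log.2 hx)

theorem deriv_pow_succ_mul_log (k : ℕ) {x : ℝ} (hx : 0 < x) :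
    deriv (fun y => y ^ (k + 1) * Real.log y) x = (k + 1) * (x ^ k * Real.log x) + x ^ k := by
  have h : HasDerivAt (fun y => y ^ (k + 1) * Real.log y) _ x :=
    (hasDerivAt_pow (k + 1) x).mul (Real.hasDerivAt_log hx.ne')
  rw [h.deriv]
  field_simp
  push_cast
  ring

theorem iteratedDeriv_succ_pow_mul_log (k : ℕ) :
    Set.EqOn (iteratedDeriv (k + 1) fun y => y ^ k * Real.log y) (fun x => k ! * x⁻¹)
      (Set.Ioi 0) := by
  induction k with
  | zero => intro x hx; simp [Real.deriv_log]
  | succ k ih =>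
    intro x (hx : 0 < x)
    have hderiv : Set.EqOn (deriv fun y => y ^ (k + 1) * Real.log y)
        (fun y => (k + 1) * (y ^ k * Real.log y) + y ^ k) (Set.Ioi 0) :=
      fun y hy => deriv_pow_succ_mul_log k hy
    rw [iteratedDeriv_succ', hderiv.iteratedDeriv_of_isOpen isOpen_Ioi _ hx,
      iteratedDeriv_fun_add (contDiffAt_const.mul (contDiffAt_pow_mul_log k hx.ne' _))
        (by fun_prop), iteratedDeriv_const_mul_field, ih hx, iteratedDeriv_pow_eq_zero (by omega)]
    push_cast [Nat.factorial_succ]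
    ring

theorem iteratedDeriv_pow_mul_log (k m : ℕ) :
    Set.EqOn (iteratedDeriv (m + (k + 1)) fun y => y ^ k * Real.log y)
      (fun x => k ! * ((-1) ^ m * m ! * x ^ (-1 - m : ℤ))) (Set.Ioi 0) := by
  intro x hx
  rw [iteratedDeriv_eq_iterate, Function.iterate_add_apply, ← iteratedDeriv_eq_iterate,
    ← iteratedDeriv_eq_iterate, (iteratedDeriv_succ_pow_mul_log k).iteratedDeriv_of_isOpen
      isOpen_Ioi m hx, iteratedDeriv_const_mul_field, iteratedDeriv_eq_iterate, iter_deriv_inv]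

theorem iteratedDeriv_ofReal_pow_mul_log_add (c : ℂ) (k m : ℕ) :
    Set.EqOn (iteratedDeriv (m + (k + 1)) fun y : ℝ => (y : ℂ) ^ k * (Real.log y + c))
      (fun x => k ! * ((-1) ^ m * m ! * (x : ℂ) ^ (-1 - m : ℤ))) (Set.Ioi 0) := by
  intro x (hx : 0 < x)
  have hsplit : (fun y : ℝ => (y : ℂ) ^ k * (Real.log y + c)) =
      fun y => ((y ^ k * Real.log y : ℝ) : ℂ) + c * ((y ^ k : ℝ) : ℂ) := by
    ext y; push_cast; ring
  have hlog : ContDiffAt ℝ (m + (k + 1) : ℕ) (fun y => ((y ^ k * Real.log y : ℝ) : ℂ)) x :=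
    ofRealCLM.contDiff.contDiffAt.comp x (contDiffAt_pow_mul_log k hx.ne' _)
  have hpow : ContDiffAt ℝ (m + (k + 1) : ℕ) (fun y => c * ((y ^ k : ℝ) : ℂ)) x :=
    contDiffAt_const.mul (ofRealCLM.contDiff.contDiffAt.comp x (contDiff_id.pow k).contDiffAt)
  rw [hsplit, iteratedDeriv_fun_add hlog hpow, iteratedDeriv_const_mul_field,
    iteratedDeriv_ofReal_comp, iteratedDeriv_ofReal_comp]
  beta_reduce
  rw [iteratedDeriv_pow_mul_log k m hx, iteratedDeriv_pow_eq_zero (by omega)]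
  push_cast
  ring

theorem tendsto_descFactorial_div_pow (k : ℕ) :
    Tendsto (fun n : ℕ => (n.descFactorial k : ℝ) / ((n : ℝ) + 1) ^ k) atTop (𝓝 1) := by
  have hlow : Tendsto (fun n : ℕ => (1 - k / ((n : ℝ) + 1)) ^ k) atTop (𝓝 1) := by
    have : Tendsto (fun n : ℕ => (k : ℝ) / ((n : ℝ) + 1)) atTop (𝓝 0) :=
      tendsto_const_nhds.div_atTop (tendsto_atTop_add_const_right _ _ tendsto_natCast_atTop_atTop)
    simpa using ((tendsto_const_nhds (x := (1 : ℝ))).sub this).pow k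
  refine tendsto_of_tendsto_of_tendsto_of_le_of_le' hlow tendsto_const_nhds ?_ ?_
  · filter_upwards [eventually_ge_atTop k] with n hn
    have hpos : (0 : ℝ) < n + 1 := by positivity
    rw [le_div_iff₀ (by positivity), ← mul_pow, sub_mul, div_mul_cancel₀ _ hpos.ne', one_mul]
    have hsub : ((n + 1 - k : ℕ) : ℝ) = n + 1 - k := by
      push_cast [Nat.cast_sub (by omega : k ≤ n + 1)]; ring
    rw [← hsub]
    exact_mod_cast Nat.pow_sub_le_descFactorial n k
  · refine Eventually.of_forall fun n => ?_
    rw [div_le_one (by positivity)]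
    calc (n.descFactorial k : ℝ) ≤ (n : ℝ) ^ k := by exact_mod_cast Nat.descFactorial_le_pow n k
      _ ≤ ((n : ℝ) + 1) ^ k := by gcongr; linarith

/-- The sequence `X^n/(n-1)! · (-d/dX)^n f (X)` along `X = n M²`, whose limit is the Borel
transform of `f` at Borel mass `M²`. -/
noncomputable def borelSeq (f : ℝ → ℂ) (M2 : ℝ) (n : ℕ) : ℂ :=
  ((n : ℂ) * M2) ^ n / ((n - 1)! : ℂ) * (-1) ^ n * iteratedDeriv n f (n * M2)

theorem borelSeq_of_eqOn_pow_mul_log {f : ℝ → ℂ} {A c : ℂ} {M2 : ℝ} (hM2 : 0 < M2) (k : ℕ)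
    (hf : Set.EqOn f (fun x => A * ((x : ℂ) ^ k * (Real.log x + c))) (Set.Ioi 0)) (m : ℕ) :
    borelSeq f M2 (m + (k + 1)) = (-1) ^ (k + 1) * k ! * A * (M2 : ℂ) ^ k /
      (((m + k).descFactorial k / (((m + k : ℕ) : ℝ) + 1) ^ k : ℝ) : ℂ) := by
  have hx : (0 : ℝ) < ((m + (k + 1) : ℕ) : ℝ) * M2 := by positivity
  rw [borelSeq, hf.iteratedDeriv_of_isOpen isOpen_Ioi _ hx, iteratedDeriv_const_mul_field,
    iteratedDeriv_ofReal_pow_mul_log_add c k m hx]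
  beta_reduce
  have hfac : ((m + (k + 1) - 1) ! : ℂ) = m ! * (m + k).descFactorial k := by
    rw [show m + (k + 1) - 1 = m + k by omega,
      ← Nat.factorial_mul_descFactorial (Nat.le_add_left k m), Nat.add_sub_cancel]
    push_cast; ring
  have hsign : (-1 : ℂ) ^ (m + (k + 1)) * (-1) ^ m = (-1) ^ (k + 1) := by
    rw [← pow_add, show m + (k + 1) + m = k + 1 + 2 * m by ring, pow_add, pow_mul]
    norm_num
  have hzpow : ((((m + (k + 1) : ℕ) : ℝ) * M2 : ℝ) : ℂ) ^ (-1 - m : ℤ) =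
      ((((m + (k + 1) : ℕ) : ℂ) * M2) ^ (m + 1))⁻¹ := by
    rw [show (-1 - m : ℤ) = -((m + 1 : ℕ) : ℤ) by push_cast; ring, zpow_neg, zpow_natCast]
    push_cast; rfl
  set N : ℂ := ((m + (k + 1) : ℕ) : ℂ) * M2 with hN
  have hN0 : N ≠ 0 := mul_ne_zero (by exact_mod_cast (by omega : m + (k + 1) ≠ 0))
    (by exact_mod_cast hM2.ne')
  have hpow : N ^ (m + (k + 1)) = N ^ k * N ^ (m + 1) := by rw [← pow_add]; congr 1; omega
  have hD : ((m + k).descFactorial k : ℂ) ≠ 0 :=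
    Nat.cast_ne_zero.2 (Nat.descFactorial_pos.2 (by omega)).ne'
  rw [hzpow, hfac, hpow]
  calc _ = ((-1 : ℂ) ^ (m + (k + 1)) * (-1) ^ m) * k ! * A * N ^ k /
        (m + k).descFactorial k * (N ^ (m + 1) * (N ^ (m + 1))⁻¹) * (m ! / m !) := by ring
    _ = _ := by
      rw [hsign, mul_inv_cancel₀ (pow_ne_zero _ hN0),
        div_self (Nat.cast_ne_zero.2 m.factorial_ne_zero), hN]
      push_cast
      simp only [mul_pow]
      field_simp
      ring

theorem tendsto_borelSeq_of_eqOn_pow_mul_log {f : ℝ → ℂ} {A c : ℂ} {M2 : ℝ} (hM2 : 0 < M2)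
    (k : ℕ) (hf : Set.EqOn f (fun x => A * ((x : ℂ) ^ k * (Real.log x + c))) (Set.Ioi 0)) :
    Tendsto (borelSeq f M2) atTop (𝓝 ((-1) ^ (k + 1) * k ! * A * (M2 : ℂ) ^ k)) := by
  have hratio : Tendsto (fun m : ℕ =>
      (((m + k).descFactorial k / (((m + k : ℕ) : ℝ) + 1) ^ k : ℝ) : ℂ)) atTop (𝓝 1) := by
    rw [← ofReal_one]
    exact (continuous_ofReal.tendsto 1).comp
      ((tendsto_descFactorial_div_pow k).comp (tendsto_add_atTop_nat k))
  rw [← tendsto_add_atTop_iff_nat (k + 1)]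
  convert tendsto_const_nhds.div hratio one_ne_zero using 2 with m
  · exact borelSeq_of_eqOn_pow_mul_log hM2 k hf m
  · rw [div_one]

theorem borel_transform_log_power_general
    (M2 μ2 : ℝ) (hM2 : 0 < M2) (hμ2 : 0 < μ2)
    (θ : ℝ) (k : ℕ)
    (f : ℝ → ℂ)
    (hf : ∀ X : ℝ, 0 < X →
      f X = (-(X : ℂ) * Complex.exp (θ * Complex.I)) ^ k *
        ((Real.log (X / μ2) : ℂ) + θ * Complex.I)) :
    Tendsto
      (fun n : ℕ =>
        (((n : ℂ) * (M2 : ℂ)) ^ n / (Nat.factorial (n - 1) : ℂ)) * (-1 : ℂ) ^ n *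
          iteratedDeriv n f ((n : ℝ) * M2))
      atTop
      (nhds (-(Nat.factorial k : ℂ) * ((M2 : ℂ) * Complex.exp (θ * Complex.I)) ^ k)) := by
  set e := Complex.exp (θ * I)
  have hf' : Set.EqOn f (fun x => (-e) ^ k * ((x : ℂ) ^ k * (Real.log x + (θ * I - Real.log μ2))))
      (Set.Ioi 0) := by
    intro x (hx : 0 < x)
    rw [hf x hx, Real.log_div hx.ne' hμ2.ne']
    push_cast
    ring
  show Tendsto (borelSeq f M2) atTop _
  convert tendsto_borelSeq_of_eqOn_pow_mul_log hM2 k hf' using 2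
  have hsign : (-1 : ℂ) ^ (k + 1) * (-1) ^ k = -1 := by
    rw [← pow_add]; exact Odd.neg_one_pow ⟨k, by ring⟩
  rw [neg_pow e]
  linear_combination (-(k ! : ℂ) * M2 ^ k * e ^ k) * hsign

/-- Borel transform of `z^k ln(−z/μ²)` with `z = −X e^{iθ}` (principal logarithm):
`B̂ z^k ln(−z/μ²) = −k! (M² e^{iθ})^k`. -/
theorem borel_transform_log_power
    (M2 μ2 : ℝ) (hM2 : 0 < M2) (hμ2 : 0 < μ2)
    (θ : ℝ) (hθ : θ ∈ Set.Ioc (-π) π) (k : ℕ)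
    (f : ℝ → ℂ)
    (hf : ∀ X : ℝ, 0 < X →
      f X = (-(X : ℂ) * Complex.exp (θ * Complex.I)) ^ k *
        ((Real.log (X / μ2) : ℂ) + θ * Complex.I)) :
    Tendsto
      (fun n : ℕ =>
        (((n : ℂ) * (M2 : ℂ)) ^ n / (Nat.factorial (n - 1) : ℂ)) * (-1 : ℂ) ^ n *
          iteratedDeriv n f ((n : ℝ) * M2))
      atTop
      (nhds (-(Nat.factorial k : ℂ) * ((M2 : ℂ) * Complex.exp (θ * Complex.I)) ^ k)) :=
  borel_transform_log_power_general M2 μ2 hM2 hμ2 θ k f hf
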